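/- For a fixed invertible n×n matrix B, positive definite A, and −1 ≤ p < 0, one has p·tr((B* A^p B)^{1/p}) = inf over positive definite X of ( tr(A^{p/2} B X^{1−p} B* A^{p/2}) − (1−p)·tr(X) ). -/

import Mathlib

open Matrix ComplexOrder

/-- Functional calculus for Hermitian matrices: apply `f` to the eigenvalues. -/
noncomputable def mfun {m : Type*} [Fintype m] [DecidableEq m] (f : ℝ → ℝ)
    (A : Matrix m m ℂ) : Matrix m m ℂ :=
  if hA : A.IsHermitian then
    (hA.eigenvectorUnitary : Matrix m m ℂ) *
      Matrix.diagonal (fun i => (f (hA.eigenvalues i) : ℂ)) *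
      (star (hA.eigenvectorUnitary : Matrix m m ℂ))
  else 0

/-- Real matrix power via the functional calculus. -/
noncomputable def mpow {m : Type*} [Fintype m] [DecidableEq m]
    (A : Matrix m m ℂ) (p : ℝ) : Matrix m m ℂ :=
  mfun (fun x => x ^ p) A

/-!
Put `M = B* A^p B`; by cyclicity of the trace the objective is `tr(X^{1-p} M) - (1-p) tr X`.
In an eigenbasis `(v_i)` of `X`, with eigenvalues `x_i` and `c_i = ⟨v_i, M v_i⟩`, this is
`∑ (c_i x_i^{1-p} - (1-p) x_i)`. Bernoulli's inequality gives `p a ≤ a^p x^{1-p} - (1-p) x`, so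
with `a = c_i^{1/p}` each term is at least `p c_i^{1/p}`. Peierls' inequality for the convex
function `t ↦ t^{1/p}` gives `∑ c_i^{1/p} ≤ tr M^{1/p}`, and as `p < 0` the objective is at least
`p tr M^{1/p}`. Equality holds at `X = M^{1/p}`, since then `X^{1-p} M = M^{1/p}`.
-/

open Set

variable {m : Type*} [Fintype m] [DecidableEq m]

lemma continuousOn_spectrum_real (f : ℝ → ℝ) (A : Matrix m m ℂ) :
    ContinuousOn f (spectrum ℝ A) :=
  A.finite_real_spectrum.continuousOn f

lemma Matrix.PosDef.pos_of_mem_spectrum_real {A : Matrix m m ℂ} (hA : A.PosDef) {x : ℝ}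
    (hx : x ∈ spectrum ℝ A) : 0 < x := by
  rw [hA.1.spectrum_real_eq_range_eigenvalues] at hx
  obtain ⟨i, rfl⟩ := hx
  exact hA.eigenvalues_pos i

lemma mfun_eq_cfc {A : Matrix m m ℂ} (hA : A.IsHermitian) (f : ℝ → ℝ) :
    mfun f A = cfc f A := by
  rw [hA.cfc_eq, Matrix.IsHermitian.cfc, mfun, dif_pos hA]
  rfl

lemma mfun_id {A : Matrix m m ℂ} (hA : A.IsHermitian) : mfun id A = A := by
  rw [mfun_eq_cfc hA, cfc_id ℝ A hA.isSelfAdjoint]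

lemma mfun_posDef {A : Matrix m m ℂ} (hA : A.PosDef) {f : ℝ → ℝ}
    (hf : ∀ x, 0 < x → 0 < f x) : (mfun f A).PosDef := by
  rw [mfun, dif_pos hA.1, star_eq_conjTranspose]
  refine (PosDef.diagonal fun i => ?_).mul_mul_conjTranspose_same ?_
  · simpa using hf _ (hA.eigenvalues_pos i)
  · exact vecMul_injective_iff_isUnit.2 Unitary.isUnit_coe

lemma mpow_posDef {A : Matrix m m ℂ} (hA : A.PosDef) (r : ℝ) : (mpow A r).PosDef :=
  mfun_posDef hA fun _ hx => Real.rpow_pos_of_pos hx r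

lemma mpow_eq_cfc {A : Matrix m m ℂ} (hA : A.PosDef) (r : ℝ) :
    mpow A r = cfc (fun x : ℝ => x ^ r) A :=
  mfun_eq_cfc hA.1 _

lemma mpow_mul_mpow {A : Matrix m m ℂ} (hA : A.PosDef) (r s : ℝ) :
    mpow A r * mpow A s = mpow A (r + s) := by
  rw [mpow_eq_cfc hA, mpow_eq_cfc hA, mpow_eq_cfc hA,
    ← cfc_mul _ _ A (continuousOn_spectrum_real _ A) (continuousOn_spectrum_real _ A)]
  exact cfc_congr fun x hx => (Real.rpow_add (hA.pos_of_mem_spectrum_real hx) r s).symm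

lemma mpow_one {A : Matrix m m ℂ} (hA : A.PosDef) : mpow A 1 = A := by
  rw [mpow_eq_cfc hA, cfc_congr (g := id) fun x _ => Real.rpow_one x,
    cfc_id ℝ A hA.1.isSelfAdjoint]

lemma mpow_mpow {A : Matrix m m ℂ} (hA : A.PosDef) (r s : ℝ) :
    mpow (mpow A r) s = mpow A (r * s) := by
  rw [mpow_eq_cfc (mpow_posDef hA r), mpow_eq_cfc hA, mpow_eq_cfc hA,
    ← cfc_comp' (fun x : ℝ => x ^ s) (fun x : ℝ => x ^ r) A
      ((A.finite_real_spectrum.image _).continuousOn _) (continuousOn_spectrum_real _ A)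
      hA.1.isSelfAdjoint]
  exact cfc_congr fun x hx => (Real.rpow_mul (hA.pos_of_mem_spectrum_real hx).le r s).symm

lemma conjTranspose_mul_diagonal_mul_apply_self (W : Matrix m m ℂ) (d : m → ℂ) (i : m) :
    (Wᴴ * diagonal d * W) i i = ∑ j, d j * (‖W j i‖ ^ 2 : ℝ) := by
  rw [mul_apply]
  simp only [mul_diagonal, conjTranspose_apply]
  refine Finset.sum_congr rfl fun j _ => ?_
  rw [Complex.ofReal_pow, ← Complex.conj_mul', Complex.star_def]
  ring

lemma sum_norm_sq_apply_eq_one {W : Matrix m m ℂ} (hW : W ∈ unitaryGroup m ℂ) (i : m) :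
    ∑ j, ‖W j i‖ ^ 2 = 1 := by
  have h := congr_fun (congr_fun (mem_unitaryGroup_iff'.1 hW) i) i
  rw [mul_apply, one_apply_eq] at h
  have h' : ∑ j, ((‖W j i‖ ^ 2 : ℝ) : ℂ) = 1 := by
    rw [← h]
    exact Finset.sum_congr rfl fun j _ => by
      rw [star_apply, Complex.star_def, Complex.conj_mul', Complex.ofReal_pow]
  exact_mod_cast h'

lemma conjTranspose_mul_mfun_mul_apply_self {M : Matrix m m ℂ} (hM : M.IsHermitian) (f : ℝ → ℝ)
    (V : Matrix m m ℂ) (i : m) :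
    (Vᴴ * mfun f M * V) i i = ∑ j, (f (hM.eigenvalues j) : ℂ) *
      (‖(star (hM.eigenvectorUnitary : Matrix m m ℂ) * V) j i‖ ^ 2 : ℝ) := by
  rw [← conjTranspose_mul_diagonal_mul_apply_self, mfun, dif_pos hM]
  simp only [conjTranspose_mul, star_eq_conjTranspose, conjTranspose_conjTranspose,
    Matrix.mul_assoc]

theorem sum_map_diag_conj_le_trace_mfun {M : Matrix m m ℂ} (hM : M.IsHermitian)
    {V : Matrix m m ℂ} (hV : V ∈ unitaryGroup m ℂ) {f : ℝ → ℝ} {s : Set ℝ}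
    (hf : ConvexOn ℝ s f) (hs : ∀ j, hM.eigenvalues j ∈ s) :
    ∑ i, f ((Vᴴ * M * V) i i).re ≤ (mfun f M).trace.re := by
  set W := star (hM.eigenvectorUnitary : Matrix m m ℂ) * V
  have hW : W ∈ unitaryGroup m ℂ := mul_mem (Unitary.star_mem (SetLike.coe_mem _)) hV
  have hdiag (g : ℝ → ℝ) (i : m) :
      ((Vᴴ * mfun g M * V) i i).re = ∑ j, ‖W j i‖ ^ 2 • g (hM.eigenvalues j) := by
    rw [conjTranspose_mul_mfun_mul_apply_self hM, Complex.re_sum]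
    simp only [← Complex.ofReal_mul, Complex.ofReal_re, smul_eq_mul, mul_comm, W]
  have htrace : (mfun f M).trace = ∑ i, (Vᴴ * mfun f M * V) i i := by
    rw [show ∑ i, (Vᴴ * mfun f M * V) i i = (Vᴴ * mfun f M * V).trace from rfl, trace_mul_cycle,
      ← star_eq_conjTranspose, mem_unitaryGroup_iff.1 hV, Matrix.one_mul]
  calc ∑ i, f ((Vᴴ * M * V) i i).re
      = ∑ i, f (∑ j, ‖W j i‖ ^ 2 • hM.eigenvalues j) := Finset.sum_congr rfl fun i _ => by
        simpa [mfun_id hM] using congr_arg f (hdiag id i)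
    _ ≤ ∑ i, ∑ j, ‖W j i‖ ^ 2 • f (hM.eigenvalues j) := Finset.sum_le_sum fun i _ =>
        hf.map_sum_le (fun _ _ => sq_nonneg _) (sum_norm_sq_apply_eq_one hW i) fun j _ => hs j
    _ = (mfun f M).trace.re := by simp only [htrace, Complex.re_sum, hdiag]

open Real in
lemma convexOn_rpow_of_nonpos {q : ℝ} (hq : q ≤ 0) : ConvexOn ℝ (Ioi 0) fun x : ℝ => x ^ q := by
  have himage : log '' Ioi 0 = univ := eq_univ_of_forall fun y => ⟨exp y, exp_pos y, log_exp y⟩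
  have hconv : ConvexOn ℝ (log '' Ioi 0) fun t => exp q ^ t :=
    himage ▸ convexOn_rpow_left (exp_pos q)
  have hanti : AntitoneOn (fun t => exp q ^ t) (log '' Ioi 0) := fun _ _ _ _ hab =>
    rpow_le_rpow_of_exponent_ge (exp_pos q) (exp_le_one_iff.2 hq) hab
  refine (hconv.comp_concaveOn strictConcaveOn_log_Ioi.concaveOn hanti).congr fun x hx => ?_
  simp only [Function.comp_apply, rpow_def_of_pos (exp_pos q), rpow_def_of_pos hx, log_exp,
    mul_comm]

open Real in
lemma mul_le_rpow_mul_rpow_one_sub_sub_mul {p a x : ℝ} (hp : p ≤ 0) (ha : 0 < a) (hx : 0 < x) :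
    p * a ≤ a ^ p * x ^ (1 - p) - (1 - p) * x := by
  have hbernoulli := one_add_mul_self_le_rpow_one_add (s := x / a - 1)
    (by linarith [div_pos hx ha]) (p := 1 - p) (by linarith)
  rw [add_sub_cancel, div_rpow hx.le ha.le, le_div_iff₀ (rpow_pos_of_pos ha _)] at hbernoulli
  have hsplit : a ^ (1 - p) * a ^ p = a := by rw [← rpow_add ha, sub_add_cancel, rpow_one]
  have hscaled := mul_le_mul_of_nonneg_left hbernoulli (rpow_pos_of_pos ha p).le
  have hlhs : a ^ p * ((1 + (1 - p) * (x / a - 1)) * a ^ (1 - p)) = p * a + (1 - p) * x := by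
    rw [mul_comm, mul_assoc, hsplit]
    field_simp
    ring
  linarith

lemma trace_mul_diagonal_mul_conjTranspose_mul (V : Matrix m m ℂ) (d : m → ℂ) (M : Matrix m m ℂ) :
    (V * diagonal d * Vᴴ * M).trace = ∑ i, d i * (Vᴴ * M * V) i i := by
  rw [show V * diagonal d * Vᴴ * M = V * (diagonal d * (Vᴴ * M)) by simp only [Matrix.mul_assoc],
    trace_mul_comm, Matrix.mul_assoc]
  simp [trace, diagonal_mul]

theorem mul_trace_mpow_one_div_le {M X : Matrix m m ℂ} (hM : M.PosDef) (hX : X.PosDef) {p : ℝ}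
    (hp : p < 0) :
    p * (mpow M (1 / p)).trace.re ≤ (mpow X (1 - p) * M).trace.re - (1 - p) * X.trace.re := by
  set V : Matrix m m ℂ := (hX.1.eigenvectorUnitary : Matrix m m ℂ)
  have hV : V ∈ unitaryGroup m ℂ := SetLike.coe_mem _
  set x := hX.1.eigenvalues
  set c : m → ℝ := fun i => ((Vᴴ * M * V) i i).re
  have hc (i : m) : 0 < c i :=
    (Complex.pos_iff.1 (hM.conjTranspose_mul_mul_same
      (mulVec_injective_iff_isUnit.2 Unitary.isUnit_coe)).diag_pos).1
  have hpeierls : ∑ i, c i ^ (1 / p) ≤ (mpow M (1 / p)).trace.re :=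
    sum_map_diag_conj_le_trace_mfun hM.1 hV
      (convexOn_rpow_of_nonpos (one_div_neg.2 hp).le) hM.eigenvalues_pos
  have htrace_mul : (mpow X (1 - p) * M).trace.re = ∑ i, x i ^ (1 - p) * c i := by
    rw [mpow, mfun, dif_pos hX.1, star_eq_conjTranspose, trace_mul_diagonal_mul_conjTranspose_mul,
      Complex.re_sum]
    simp only [Complex.re_ofReal_mul, c]
    rfl
  have htrace : X.trace.re = ∑ i, x i := by
    simp [hX.1.trace_eq_sum_eigenvalues, Complex.re_sum, x]
  calc p * (mpow M (1 / p)).trace.re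
      ≤ ∑ i, p * c i ^ (1 / p) := by
        rw [← Finset.mul_sum]
        exact mul_le_mul_of_nonpos_left hpeierls hp.le
    _ ≤ ∑ i, ((c i ^ (1 / p)) ^ p * x i ^ (1 - p) - (1 - p) * x i) :=
        Finset.sum_le_sum fun i _ => mul_le_rpow_mul_rpow_one_sub_sub_mul hp.le
          (Real.rpow_pos_of_pos (hc i) _) (hX.eigenvalues_pos i)
    _ = (mpow X (1 - p) * M).trace.re - (1 - p) * X.trace.re := by
        rw [htrace_mul, htrace, Finset.mul_sum, ← Finset.sum_sub_distrib]
        refine Finset.sum_congr rfl fun i _ => ?_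
        rw [← Real.rpow_mul (hc i).le, one_div_mul_cancel hp.ne, Real.rpow_one, mul_comm]

lemma mpow_mpow_one_div_one_sub_mul_self {M : Matrix m m ℂ} (hM : M.PosDef) {p : ℝ} (hp : p ≠ 0) :
    mpow (mpow M (1 / p)) (1 - p) * M = mpow M (1 / p) := by
  nth_rw 2 [← mpow_one hM]
  rw [mpow_mpow hM, mpow_mul_mpow hM]
  congr 1
  field_simp
  ring

lemma trace_mpow_half_mul_mul_mpow_half {A : Matrix m m ℂ} (hA : A.PosDef) (p : ℝ)
    (B Y : Matrix m m ℂ) :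
    (mpow A (p / 2) * B * Y * Bᴴ * mpow A (p / 2)).trace = (Y * (Bᴴ * mpow A p * B)).trace := by
  rw [show mpow A (p / 2) * B * Y * Bᴴ * mpow A (p / 2) = (mpow A (p / 2) * B * Y) *
      (Bᴴ * mpow A (p / 2)) by simp only [Matrix.mul_assoc], trace_mul_comm,
    show Bᴴ * mpow A (p / 2) * (mpow A (p / 2) * B * Y) =
      (Bᴴ * (mpow A (p / 2) * mpow A (p / 2)) * B) * Y by simp only [Matrix.mul_assoc],
    trace_mul_comm, mpow_mul_mpow hA, add_halves]

theorem variational_formula_neg_p_general {n : ℕ} (B : Matrix (Fin n) (Fin n) ℂ) (hB : IsUnit B)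
    (A : Matrix (Fin n) (Fin n) ℂ) (hA : A.PosDef) (p : ℝ) (hp1 : p < 0) :
    IsGLB {x : ℝ | ∃ X : Matrix (Fin n) (Fin n) ℂ, X.PosDef ∧
        x = (mpow A (p/2) * B * mpow X (1 - p) * Bᴴ * mpow A (p/2)).trace.re -
          (1 - p) * X.trace.re}
      (p * (mpow (Bᴴ * mpow A p * B) (1/p)).trace.re) := by
  have hM : (Bᴴ * mpow A p * B).PosDef :=
    (mpow_posDef hA p).conjTranspose_mul_mul_same (mulVec_injective_iff_isUnit.2 hB)
  refine ⟨?_, fun b hb => hb ⟨mpow (Bᴴ * mpow A p * B) (1 / p), mpow_posDef hM _, ?_⟩⟩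
  · rintro _ ⟨X, hX, rfl⟩
    rw [trace_mpow_half_mul_mul_mpow_half hA]
    exact mul_trace_mpow_one_div_le hM hX hp1
  · rw [trace_mpow_half_mul_mul_mpow_half hA, mpow_mpow_one_div_one_sub_mul_self hM hp1.ne]
    ring

theorem variational_formula_neg_p {n : ℕ} (B : Matrix (Fin n) (Fin n) ℂ) (hB : IsUnit B)
    (A : Matrix (Fin n) (Fin n) ℂ) (hA : A.PosDef) (p : ℝ) (hp0 : -1 ≤ p) (hp1 : p < 0) :
    IsGLB {x : ℝ | ∃ X : Matrix (Fin n) (Fin n) ℂ, X.PosDef ∧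
        x = (mpow A (p/2) * B * mpow X (1 - p) * Bᴴ * mpow A (p/2)).trace.re -
          (1 - p) * X.trace.re}
      (p * (mpow (Bᴴ * mpow A p * B) (1/p)).trace.re) :=
  variational_formula_neg_p_general B hB A hA p hp1
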